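/- Let p ∈ [1,∞) and N ∈ ℕ, and let φ : ℝ^N → ℝ^N be the Mazur map φ(x)_i = sgn(x_i)·|x_i|^p. Then for all x, y in the closed unit ball of ℝ^N with respect to the ℓ^p-norm, | ‖x - y‖_p - ‖φ(x) - φ(y)‖_1 | ≤ 2·(2^p - 2). -/
import Mathlib

open Real Finset

noncomputable def pnorm (p : ℝ) {N : ℕ} (x : Fin N → ℝ) : ℝ :=
  (∑ i, |x i| ^ p) ^ (1 / p)

noncomputable def mazurMap (p : ℝ) {N : ℕ} (x : Fin N → ℝ) : Fin N → ℝ :=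
  fun i => Real.sign (x i) * |x i| ^ p

lemma conv_rpow {p u v : ℝ} (hp : 1 ≤ p) (hu : 0 ≤ u) (hv : 0 ≤ v) :
    (u + v) ^ p ≤ 2 ^ (p - 1) * (u ^ p + v ^ p) := by
  lift u to NNReal using hu
  lift v to NNReal using hv
  exact_mod_cast NNReal.rpow_add_le_mul_rpow_add_rpow u v hp

lemma superadd_rpow {p u v : ℝ} (hp : 1 ≤ p) (hu : 0 ≤ u) (hv : 0 ≤ v) :
    u ^ p + v ^ p ≤ (u + v) ^ p := by
  lift u to NNReal using hu
  lift v to NNReal using hv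
  exact_mod_cast NNReal.add_rpow_le_rpow_add u v hp

lemma one_le_c {p : ℝ} (hp : 1 ≤ p) : (1:ℝ) ≤ 2 ^ (p - 1) := by
  calc (1:ℝ) = 2 ^ (0:ℝ) := by rw [Real.rpow_zero]
  _ ≤ 2 ^ (p - 1) := Real.rpow_le_rpow_of_exponent_le one_le_two (by linarith)

lemma two_le_two_rpow {p : ℝ} (hp : 1 ≤ p) : (2:ℝ) ≤ 2 ^ p := by
  calc (2:ℝ) = 2 ^ (1:ℝ) := by rw [Real.rpow_one]
  _ ≤ 2 ^ p := Real.rpow_le_rpow_of_exponent_le one_le_two hp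

lemma psi_nonneg {p a : ℝ} (hp : 0 < p) (ha : 0 ≤ a) : Real.sign a * |a| ^ p = a ^ p := by
  rcases ha.eq_or_lt with h | h
  · simp [← h, Real.sign_zero, Real.zero_rpow hp.ne']
  · rw [Real.sign_of_pos h, abs_of_pos h, one_mul]

lemma psi_nonpos {p a : ℝ} (hp : 0 < p) (ha : a ≤ 0) : Real.sign a * |a| ^ p = -(-a) ^ p := by
  rcases ha.eq_or_lt with h | h
  · simp [h, Real.sign_zero, Real.zero_rpow hp.ne']
  · rw [Real.sign_of_neg h, abs_of_neg h, neg_one_mul]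

-- key scalar inequality, both nonneg case
lemma key_nn {p : ℝ} (hp : 1 ≤ p) {a b : ℝ} (ha : 0 ≤ a) (hb : 0 ≤ b) :
    abs (|a - b| ^ p - |a ^ p - b ^ p|) ≤ (2 ^ (p - 1) - 1) * (a ^ p + b ^ p) := by
  have hc := one_le_c hp
  -- WLOG b ≤ a
  wlog hba : b ≤ a with H
  · push_neg at hba
    rw [abs_sub_comm a b, abs_sub_comm (a ^ p), add_comm]
    exact H hp hb ha hc hba.le
  have hab : (0:ℝ) ≤ a - b := by linarith
  have h1 : (a - b) ^ p + b ^ p ≤ a ^ p := by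
    have := superadd_rpow hp hab hb
    rwa [sub_add_cancel] at this
  have h2 : a ^ p ≤ 2 ^ (p - 1) * ((a - b) ^ p + b ^ p) := by
    have := conv_rpow hp hab hb
    rwa [sub_add_cancel] at this
  have h3 : (a - b) ^ p ≤ a ^ p := Real.rpow_le_rpow hab (by linarith) (by linarith)
  have hbp : (0:ℝ) ≤ b ^ p := Real.rpow_nonneg hb p
  have habs : |a ^ p - b ^ p| = a ^ p - b ^ p := by
    rw [abs_of_nonneg]
    have : b ^ p ≤ a ^ p := Real.rpow_le_rpow hb hba (by linarith)
    linarith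
  have hrhs : (0:ℝ) ≤ (2 ^ (p - 1) - 1) * (a ^ p + b ^ p) :=
    mul_nonneg (by linarith) (by positivity)
  rw [abs_of_nonneg hab, habs, abs_le]
  constructor
  · nlinarith [mul_nonneg (sub_nonneg.2 hc) (sub_nonneg.2 h3)]
  · linarith

-- key scalar inequality, opposite signs case (a, c ≥ 0, comparing (a+c)^p with a^p + c^p)
lemma key_opp {p : ℝ} (hp : 1 ≤ p) {a c : ℝ} (ha : 0 ≤ a) (hc : 0 ≤ c) :
    |(a + c) ^ p - (a ^ p + c ^ p)| ≤ (2 ^ (p - 1) - 1) * (a ^ p + c ^ p) := by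
  have h1 := superadd_rpow hp ha hc
  have h2 := conv_rpow hp ha hc
  rw [abs_le]
  have hap : (0:ℝ) ≤ a ^ p := Real.rpow_nonneg ha p
  have hcp : (0:ℝ) ≤ c ^ p := Real.rpow_nonneg hc p
  have hone := one_le_c hp
  constructor <;> nlinarith [mul_nonneg (sub_nonneg.2 hone) (add_nonneg hap hcp)]

-- key scalar inequality
lemma key {p : ℝ} (hp : 1 ≤ p) (a b : ℝ) :
    abs (|a - b| ^ p - |Real.sign a * |a| ^ p - Real.sign b * |b| ^ p|) ≤
      (2 ^ (p - 1) - 1) * (|a| ^ p + |b| ^ p) := by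
  have hp0 : (0:ℝ) < p := by linarith
  rcases le_total 0 a with ha | ha <;> rcases le_total 0 b with hb | hb
  · rw [psi_nonneg hp0 ha, psi_nonneg hp0 hb, abs_of_nonneg ha, abs_of_nonneg hb]
    exact key_nn hp ha hb
  · -- a ≥ 0, b ≤ 0
    rw [psi_nonneg hp0 ha, psi_nonpos hp0 hb, abs_of_nonneg ha, abs_of_nonpos hb]
    have h1 : a - b = a + (-b) := by ring
    have h2 : a ^ p - -(-b) ^ p = a ^ p + (-b) ^ p := by ring
    rw [h1, h2, abs_of_nonneg (by linarith : (0:ℝ) ≤ a + -b),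
      abs_of_nonneg (add_nonneg (Real.rpow_nonneg ha p) (Real.rpow_nonneg (by linarith) p))]
    exact key_opp hp ha (by linarith)
  · -- a ≤ 0, b ≥ 0
    rw [psi_nonpos hp0 ha, psi_nonneg hp0 hb, abs_of_nonpos ha, abs_of_nonneg hb]
    have h1 : |a - b| = b + (-a) := by
      rw [abs_sub_comm, abs_of_nonneg (by linarith)]; ring
    have h2 : |(-(-a) ^ p) - b ^ p| = b ^ p + (-a) ^ p := by
      rw [abs_sub_comm]
      have : b ^ p - -(-a) ^ p = b ^ p + (-a) ^ p := by ring
      rw [this, abs_of_nonneg (add_nonneg (Real.rpow_nonneg hb p) (Real.rpow_nonneg (by linarith) p))]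
    rw [h1, h2, add_comm ((-a) ^ p)]
    exact key_opp hp hb (by linarith)
  · -- both nonpos
    rw [psi_nonpos hp0 ha, psi_nonpos hp0 hb, abs_of_nonpos ha, abs_of_nonpos hb]
    have h1 : |a - b| = |(-a) - (-b)| := by
      rw [show (-a) - (-b) = -(a - b) by ring, abs_neg]
    have h2 : |(-(-a) ^ p) - (-(-b) ^ p)| = |(-a) ^ p - (-b) ^ p| := by
      rw [show (-(-a) ^ p) - (-(-b) ^ p) = -((-a) ^ p - (-b) ^ p) by ring, abs_neg]
    rw [h1, h2]
    exact key_nn hp (by linarith) (by linarith)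

lemma two_pow_split {p : ℝ} : (2:ℝ) ^ p = 2 * 2 ^ (p - 1) := by
  nth_rewrite 1 [show p = 1 + (p - 1) by ring]
  rw [Real.rpow_add two_pos, Real.rpow_one]

lemma p_sub_one_le {p : ℝ} (hp : 1 ≤ p) : p - 1 ≤ 2 ^ p - 2 := by
  have h2 : Real.log 2 * (p - 1) + 1 ≤ 2 ^ (p - 1) := by
    rw [Real.rpow_def_of_pos two_pos]
    exact Real.add_one_le_exp _
  have h3 : (0.6931471803 : ℝ) < Real.log 2 := Real.log_two_gt_d9
  have h4 : (2:ℝ) ^ p = 2 * 2 ^ (p - 1) := two_pow_split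
  nlinarith [mul_le_mul_of_nonneg_right h3.le (show (0:ℝ) ≤ p - 1 by linarith)]

lemma t_bound {p : ℝ} (hp : 1 ≤ p) {t : ℝ} (ht0 : 0 ≤ t) (ht2 : t ≤ 2) :
    |t - t ^ p| ≤ 2 ^ p - 2 := by
  have h2p := two_le_two_rpow hp
  have hp0 : (0:ℝ) < p := by linarith
  rw [abs_le]
  constructor
  · -- equivalent to t^p - t ≤ 2^p - 2
    rcases le_total t 1 with h1 | h1
    · rcases ht0.eq_or_lt with h0 | h0
      · rw [← h0, Real.zero_rpow hp0.ne']; linarith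
      · have h : t ^ p ≤ t ^ (1:ℝ) := Real.rpow_le_rpow_of_exponent_ge h0 h1 hp
        rw [Real.rpow_one] at h; linarith
    · have ht2' : t / 2 ≤ 1 := by linarith
      have ht2'' : (0:ℝ) < t / 2 := by linarith
      have h : (t / 2) ^ p ≤ (t / 2) ^ (1:ℝ) :=
        Real.rpow_le_rpow_of_exponent_ge ht2'' ht2' hp
      rw [Real.rpow_one] at h
      have htp : t ^ p ≤ 2 ^ p * (t / 2) := by
        calc t ^ p = 2 ^ p * (t / 2) ^ p := by
              rw [← Real.mul_rpow (by norm_num) (by linarith)]; ring_nf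
        _ ≤ 2 ^ p * (t / 2) := by
              exact mul_le_mul_of_nonneg_left h (Real.rpow_nonneg (by norm_num) p)
      nlinarith [mul_nonneg (show (0:ℝ) ≤ 2 - t by linarith) (show (0:ℝ) ≤ 2 ^ p - 2 by linarith)]
  · -- t - t^p ≤ 2^p - 2
    rcases le_total 1 t with h1 | h1
    · have h : t ^ (1:ℝ) ≤ t ^ p := Real.rpow_le_rpow_of_exponent_le h1 hp
      rw [Real.rpow_one] at h; linarith
    · have hkey : t - t ^ p ≤ p - 1 := by
        rcases ht0.eq_or_lt with h0 | h0
        · rw [← h0, Real.zero_rpow hp0.ne']; linarith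
        · have e1 : Real.log t * (p - 1) + 1 ≤ t ^ (p - 1) := by
            rw [Real.rpow_def_of_pos h0]
            exact Real.add_one_le_exp _
          have e2 : t ^ p = t * t ^ (p - 1) := by
            nth_rewrite 1 [show p = 1 + (p - 1) by ring]
            rw [Real.rpow_add h0, Real.rpow_one]
          have hinv : -Real.log t ≤ t⁻¹ - 1 := by
            have := Real.log_le_sub_one_of_pos (show (0:ℝ) < t⁻¹ by positivity)
            rwa [Real.log_inv] at this
          have hti : t * t⁻¹ = 1 := mul_inv_cancel₀ h0.ne'
          nlinarith [mul_le_mul_of_nonneg_left e1 ht0,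
            mul_le_mul_of_nonneg_left hinv (mul_nonneg (show (0:ℝ) ≤ p - 1 by linarith) ht0)]
      linarith [p_sub_one_le hp]

lemma sum_le_one_of_pnorm {p : ℝ} (hp0 : 0 < p) {N : ℕ} {x : Fin N → ℝ}
    (hx : pnorm p x ≤ 1) : ∑ i, |x i| ^ p ≤ 1 := by
  simp only [pnorm] at hx
  have hnn : (0:ℝ) ≤ ∑ i, |x i| ^ p :=
    Finset.sum_nonneg fun i _ => Real.rpow_nonneg (abs_nonneg _) _
  have h := Real.rpow_le_rpow (Real.rpow_nonneg hnn _) hx hp0.le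
  rwa [← Real.rpow_mul hnn, one_div, inv_mul_cancel₀ hp0.ne', Real.rpow_one,
    Real.one_rpow] at h

theorem stmt_4 (p : ℝ) (hp : 1 ≤ p) (N : ℕ) (x y : Fin N → ℝ)
    (hx : pnorm p x ≤ 1) (hy : pnorm p y ≤ 1) :
    |pnorm p (x - y) - pnorm 1 (mazurMap p x - mazurMap p y)| ≤ 2 * (2 ^ p - 2) := by
  have hp0 : (0:ℝ) < p := by linarith
  have h2p := two_le_two_rpow hp
  set S : ℝ := ∑ i, |x i - y i| ^ p with hS
  set B : ℝ := ∑ i, |mazurMap p x i - mazurMap p y i| with hBdef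
  have hSnn : (0:ℝ) ≤ S :=
    Finset.sum_nonneg fun i _ => Real.rpow_nonneg (abs_nonneg _) _
  have hB1 : pnorm 1 (mazurMap p x - mazurMap p y) = B := by
    simp [pnorm, Real.rpow_one, hBdef]
  have hA : pnorm p (x - y) = S ^ (1 / p) := by
    simp [pnorm, hS]
  have hSx := sum_le_one_of_pnorm hp0 hx
  have hSy := sum_le_one_of_pnorm hp0 hy
  have hA0 : (0:ℝ) ≤ pnorm p (x - y) := by
    rw [hA]; exact Real.rpow_nonneg hSnn _
  have hA2 : pnorm p (x - y) ≤ 2 := by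
    have h := Real.Lp_add_le (Finset.univ) x (-y) hp
    simp only [Pi.neg_apply, ← sub_eq_add_neg, abs_neg] at h
    have hxx : pnorm p (x - y) ≤ pnorm p x + pnorm p y := by
      simpa [pnorm] using h
    linarith
  have hApS : (pnorm p (x - y)) ^ p = S := by
    rw [hA, ← Real.rpow_mul hSnn, one_div, inv_mul_cancel₀ hp0.ne', Real.rpow_one]
  have h1 : |S - B| ≤ 2 ^ p - 2 := by
    have hterm : ∀ i ∈ Finset.univ (α := Fin N),
        abs (|x i - y i| ^ p - |mazurMap p x i - mazurMap p y i|) ≤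
          (2 ^ (p - 1) - 1) * (|x i| ^ p + |y i| ^ p) := by
      intro i _
      simpa [mazurMap] using key hp (x i) (y i)
    calc |S - B| = |∑ i, (|x i - y i| ^ p - |mazurMap p x i - mazurMap p y i|)| := by
          rw [hS, hBdef, ← Finset.sum_sub_distrib]
    _ ≤ ∑ i, abs (|x i - y i| ^ p - |mazurMap p x i - mazurMap p y i|) :=
          Finset.abs_sum_le_sum_abs _ _
    _ ≤ ∑ i, (2 ^ (p - 1) - 1) * (|x i| ^ p + |y i| ^ p) := Finset.sum_le_sum hterm
    _ = (2 ^ (p - 1) - 1) * ((∑ i, |x i| ^ p) + ∑ i, |y i| ^ p) := by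
          rw [← Finset.mul_sum, Finset.sum_add_distrib]
    _ ≤ (2 ^ (p - 1) - 1) * 2 := by
          have := one_le_c hp
          apply mul_le_mul_of_nonneg_left (by linarith) (by linarith)
    _ = 2 * 2 ^ (p - 1) - 2 := by
          generalize (2:ℝ) ^ (p - 1) = X; ring
    _ = 2 ^ p - 2 := by rw [two_pow_split (p := p)]
  have h2 : |pnorm p (x - y) - S| ≤ 2 ^ p - 2 := by
    have := t_bound hp hA0 hA2
    rwa [hApS] at this
  have h3 := abs_sub_le (pnorm p (x - y)) S B
  rw [hB1]
  linarith
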